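/- Let A be a c.e. subset of ℕ that is D-maximal and Type 10. Then there is a c.e. set B disjoint from A such that A ∪ B is r-maximal and atomless. -/

import Mathlib

open Set Function

/-- A set of naturals is computably enumerable (c.e.) -/
def CESet (A : Set ℕ) : Prop := REPred (· ∈ A)

/-- A set of naturals is computable -/
def ComputableSet (A : Set ℕ) : Prop := ComputablePred (· ∈ A)

/-- X ⊆* Y : X is almost contained in Y -/
def SubsetStar (X Y : Set ℕ) : Prop := (X \ Y).Finite

/-- X =* Y : X and Y differ by a finite set -/
def EqStar (X Y : Set ℕ) : Prop := (X \ Y).Finite ∧ (Y \ X).Finite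

/-- G is a generating set for 𝒟(A): a countable family of c.e. sets, each disjoint
from A, such that every c.e. set disjoint from A is almost covered by finitely many
members of G. -/
def Generates (A : Set ℕ) (G : Set (Set ℕ)) : Prop :=
  G.Countable ∧ (∀ X ∈ G, CESet X) ∧ (∀ X ∈ G, Disjoint X A) ∧
  ∀ D : Set ℕ, CESet D → Disjoint D A →
    ∃ F : Set (Set ℕ), F ⊆ G ∧ F.Finite ∧ SubsetStar D (⋃₀ F)

/-- S is simple -/
def SimpleSet (S : Set ℕ) : Prop :=
  CESet S ∧ Sᶜ.Infinite ∧ ∀ W : Set ℕ, CESet W → Disjoint W S → W.Finite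

/-- A is 𝒟-maximal -/
def DMaximal (A : Set ℕ) : Prop :=
  CESet A ∧ ∀ W : Set ℕ, CESet W → ∃ D : Set ℕ, CESet D ∧ Disjoint D A ∧
    (SubsetStar W (A ∪ D) ∨ EqStar (W ∪ A ∪ D) Set.univ)

/-- M is r-maximal -/
def RMaximal (M : Set ℕ) : Prop :=
  CESet M ∧ Mᶜ.Infinite ∧
    ∀ R : Set ℕ, ComputableSet R → (R ∩ Mᶜ).Finite ∨ (Rᶜ ∩ Mᶜ).Finite

/-- M is maximal -/
def MaximalSet (M : Set ℕ) : Prop :=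
  CESet M ∧ Mᶜ.Infinite ∧
    ∀ W : Set ℕ, CESet W → M ⊆ W → (W \ M).Finite ∨ Wᶜ.Finite

/-- B is atomless -/
def AtomlessSet (B : Set ℕ) : Prop :=
  ∀ C : Set ℕ, CESet C → B ⊆ C → Cᶜ.Infinite →
    ∃ E : Set ℕ, CESet E ∧ SubsetStar C E ∧ (E \ C).Infinite ∧ Eᶜ.Infinite

/-- A0, A1 form a Friedberg splitting of A -/
def FriedbergSplitting (A0 A1 A : Set ℕ) : Prop :=
  CESet A0 ∧ CESet A1 ∧ Disjoint A0 A1 ∧ A0 ∪ A1 = A ∧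
    ∀ W : Set ℕ, CESet W → ¬ CESet (W \ A) → ¬ CESet (W \ A0) ∧ ¬ CESet (W \ A1)

/-- E is a major subset of D -/
def MajorIn (E D : Set ℕ) : Prop :=
  CESet E ∧ CESet D ∧ E ⊆ D ∧ (D \ E).Infinite ∧
    ∀ W : Set ℕ, CESet W → SubsetStar Dᶜ W → SubsetStar Eᶜ W

/-- H is hh-simple: the lattice of c.e. supersets of H mod finite is a boolean algebra -/
def HHSimple (H : Set ℕ) : Prop :=
  CESet H ∧ Hᶜ.Infinite ∧
    ∀ W : Set ℕ, CESet W → ∃ V : Set ℕ, CESet V ∧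
      EqStar ((W ∪ H) ∩ (V ∪ H)) H ∧ EqStar (W ∪ V ∪ H) Set.univ

/-- A is strongly r-separable -/
def StronglyRSeparable (A : Set ℕ) : Prop :=
  ∀ B : Set ℕ, CESet B → Disjoint B A →
    ∃ C : Set ℕ, ComputableSet C ∧ B ⊆ C ∧ Disjoint C A ∧ (C \ B).Infinite

/-- Structure of a Type 5 generating family: D0 together with the R_i. -/
def Type5Family (D0 : Set ℕ) (R : ℕ → Set ℕ) : Prop :=
  CESet D0 ∧ ¬ ComputableSet D0 ∧ D0.Infinite ∧
  Function.Injective R ∧ (∀ i, D0 ≠ R i) ∧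
  (∀ i, ComputableSet (R i) ∧ (R i).Infinite) ∧
  Pairwise (Function.onFun Disjoint R) ∧
  (∀ i, Disjoint D0 (R i))

/-- Structure of a Type 7 generating family: D0 together with the R_i. -/
def Type7Family (D0 : Set ℕ) (R : ℕ → Set ℕ) : Prop :=
  CESet D0 ∧ ¬ ComputableSet D0 ∧
  Function.Injective R ∧ (∀ i, D0 ≠ R i) ∧
  (∀ i, ComputableSet (R i) ∧ (R i).Infinite) ∧
  Pairwise (Function.onFun Disjoint R) ∧
  {i : ℕ | (D0 ∩ R i).Nonempty}.Infinite

/-- Structure of a Type 8 generating family: the D_i together with the R_i. -/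
def Type8Family (D R : ℕ → Set ℕ) : Prop :=
  Function.Injective D ∧ Function.Injective R ∧ (∀ i j, D i ≠ R j) ∧
  (∀ i, CESet (D i) ∧ ¬ ComputableSet (D i)) ∧
  Pairwise (Function.onFun Disjoint D) ∧
  (∀ i, ComputableSet (R i) ∧ (R i).Infinite) ∧
  Pairwise (Function.onFun Disjoint R)

/-- Structure of a Type 9 generating family: the nested D_i together with the R_i. -/
def Type9Family (D R : ℕ → Set ℕ) : Prop :=
  Function.Injective R ∧ (∀ i j, D i ≠ R j) ∧
  (∀ i, ComputableSet (R i) ∧ (R i).Infinite) ∧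
  Pairwise (Function.onFun Disjoint R) ∧
  (∀ i, CESet (D i) ∧ ¬ ComputableSet (D i) ∧ (D i).Infinite) ∧
  (∀ l, D l ⊆ D (l + 1)) ∧
  (∀ l, ¬ CESet (D (l + 1) \ D l)) ∧
  (∀ l, {j : ℕ | (R j \ D l).Infinite}.Infinite)

def IsType1 (G : Set (Set ℕ)) : Prop := G = {∅}

def IsType2 (G : Set (Set ℕ)) : Prop :=
  ∃ R : Set ℕ, G = {R} ∧ ComputableSet R ∧ R.Infinite

def IsType3 (G : Set (Set ℕ)) : Prop :=
  ∃ W : Set ℕ, G = {W} ∧ CESet W ∧ ¬ ComputableSet W ∧ W.Infinite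

def IsType4 (G : Set (Set ℕ)) : Prop :=
  ∃ R : ℕ → Set ℕ, G = Set.range R ∧ Function.Injective R ∧
    (∀ i, ComputableSet (R i) ∧ (R i).Infinite) ∧
    Pairwise (Function.onFun Disjoint R)

def IsType5 (G : Set (Set ℕ)) : Prop :=
  ∃ (D0 : Set ℕ) (R : ℕ → Set ℕ), G = insert D0 (Set.range R) ∧ Type5Family D0 R

def IsType6 (G : Set (Set ℕ)) : Prop :=
  ∃ D : ℕ → Set ℕ, G = Set.range D ∧ Function.Injective D ∧
    (∀ i, CESet (D i) ∧ ¬ ComputableSet (D i) ∧ (D i).Infinite) ∧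
    Pairwise (Function.onFun Disjoint D)

def IsType7 (G : Set (Set ℕ)) : Prop :=
  ∃ (D0 : Set ℕ) (R : ℕ → Set ℕ), G = insert D0 (Set.range R) ∧ Type7Family D0 R

def IsType8 (G : Set (Set ℕ)) : Prop :=
  ∃ D R : ℕ → Set ℕ, G = Set.range D ∪ Set.range R ∧ Type8Family D R

def IsType9 (G : Set (Set ℕ)) : Prop :=
  ∃ D R : ℕ → Set ℕ, G = Set.range D ∪ Set.range R ∧ Type9Family D R

def IsType10 (G : Set (Set ℕ)) : Prop :=
  ∃ D : ℕ → Set ℕ, G = Set.range D ∧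
    (∀ i, CESet (D i) ∧ ¬ ComputableSet (D i) ∧ (D i).Infinite) ∧
    (∀ l, D l ⊆ D (l + 1)) ∧
    (∀ l, ¬ CESet (D (l + 1) \ D l))

/-- G is a generating set of Type n (n = 1, …, 10). -/
def GenTypeN (n : ℕ) (G : Set (Set ℕ)) : Prop :=
  match n with
  | 1 => IsType1 G
  | 2 => IsType2 G
  | 3 => IsType3 G
  | 4 => IsType4 G
  | 5 => IsType5 G
  | 6 => IsType6 G
  | 7 => IsType7 G
  | 8 => IsType8 G
  | 9 => IsType9 G
  | 10 => IsType10 G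
  | _ => False

/-- The c.e. set A is of Type n: 𝒟(A) has a generating set of Type n
but no generating set of any Type m < n. -/
def SetOfType (A : Set ℕ) (n : ℕ) : Prop :=
  (∃ G : Set (Set ℕ), Generates A G ∧ GenTypeN n G) ∧
  ∀ m : ℕ, m < n → ¬ ∃ G : Set (Set ℕ), Generates A G ∧ GenTypeN m G

/-- (F_i) is an A-special list. -/
def ASpecialList (A : Set ℕ) (F : ℕ → Set ℕ) : Prop :=
  F 0 = A ∧ (∀ i, CESet (F i) ∧ ¬ ComputableSet (F i)) ∧
  Pairwise (Function.onFun Disjoint F) ∧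
  ∀ W : Set ℕ, CESet W → ∃ i : ℕ,
    SubsetStar W (⋃ l ≤ i, F l) ∨ EqStar (W ∪ ⋃ l ≤ i, F l) Set.univ

/-!
Let `D 0 ⊆ D 1 ⊆ ⋯` be the Type 10 generating family. If for every `j` some computable set
disjoint from `A` had infinitely many elements outside `D j`, disjointifying a suitable sequence
of such sets would give a Type 9 generating set. Hence a single `B = D j` almost contains every
computable set disjoint from `A`.

For a c.e. `W`, 𝒟-maximality gives `E ∈ 𝒟(A)` with `W ⊆* A ∪ E` or `W ∪ A ∪ E =* ℕ`. In the
second case the reduction principle splits `W ∪ A` and `E` into disjoint c.e. pieces; the piece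
inside `E` is computable, so `(W ∪ A)ᶜ ⊆* B`. Applied to computable `W` this is r-maximality of
`A ∪ B`. Applied to a c.e. `C ⊇ A ∪ B` with infinite complement, the second case is impossible,
and in the first one `C ∪ D (m + 1)` lies strictly between `C` and `ℕ`, where `E ⊆* D m`.
-/

namespace ComputableSet

theorem ceSet {X : Set ℕ} (h : ComputableSet X) : CESet X :=
  ComputablePred.to_re h

theorem compl {X : Set ℕ} (h : ComputableSet X) : ComputableSet Xᶜ :=
  ComputablePred.not h

theorem union {X Y : Set ℕ} (hX : ComputableSet X) (hY : ComputableSet Y) :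
    ComputableSet (X ∪ Y) := by
  obtain ⟨_, hX⟩ := hX
  obtain ⟨_, hY⟩ := hY
  exact Computable.computablePred <| (Primrec.or.to_comp.comp hX hY).of_eq fun n => by simp

theorem inter {X Y : Set ℕ} (hX : ComputableSet X) (hY : ComputableSet Y) :
    ComputableSet (X ∩ Y) := by
  obtain ⟨_, hX⟩ := hX
  obtain ⟨_, hY⟩ := hY
  exact Computable.computablePred <| (Primrec.and.to_comp.comp hX hY).of_eq fun n => by simp

theorem diff {X Y : Set ℕ} (hX : ComputableSet X) (hY : ComputableSet Y) :
    ComputableSet (X \ Y) :=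
  hX.inter hY.compl

theorem of_finite {X : Set ℕ} (h : X.Finite) : ComputableSet X := by
  obtain ⟨s, rfl⟩ := h.exists_finset_coe
  exact PrimrecPred.computablePred <|
    ((PrimrecRel.exists_mem_list Primrec.eq).comp (Primrec.const s.toList) Primrec.id).of_eq
      fun n => by simp

theorem empty : ComputableSet ∅ :=
  of_finite finite_empty

theorem of_ceSet_compl {X : Set ℕ} (h : CESet X) (hc : CESet Xᶜ) : ComputableSet X :=
  ComputablePred.computable_iff_re_compl_re'.2 ⟨h, hc⟩

end ComputableSet

namespace CESet

theorem of_finite {X : Set ℕ} (h : X.Finite) : CESet X :=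
  (ComputableSet.of_finite h).ceSet

theorem union {X Y : Set ℕ} (hX : CESet X) (hY : CESet Y) : CESet (X ∪ Y) := by
  obtain ⟨k, hk, hdom⟩ := Partrec.merge' hX hY
  exact hk.dom_re.of_eq fun n => by simp [(hdom n).2, Part.assert]

theorem exists_reduction {X Y : Set ℕ} (hX : CESet X) (hY : CESet Y) :
    ∃ X' Y', CESet X' ∧ CESet Y' ∧ X' ⊆ X ∧ Y' ⊆ Y ∧ Disjoint X' Y' ∧ X' ∪ Y' = X ∪ Y := by
  obtain ⟨k, hk, hspec⟩ := Partrec.merge' (hX.map (Computable.const true).to₂)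
    (hY.map (Computable.const false).to₂)
  have hmem : ∀ n b, b ∈ k n → (n ∈ X ∧ b = true) ∨ (n ∈ Y ∧ b = false) := fun n b hb => by
    simpa [eq_comm] using (hspec n).1 b hb
  have hre : ∀ b, CESet {n | b ∈ k n} := fun b =>
    (hk.bind (Partrec.cond ((Primrec.eq.comp Primrec.snd (Primrec.const b)).decide.to_comp)
      (Partrec.const' (Part.some ())) Partrec.none).to₂).dom_re.of_eq fun n => by
      simp [Part.mem_eq, Bool.cond_decide, apply_ite Part.Dom]
  refine ⟨{n | true ∈ k n}, {n | false ∈ k n}, hre true, hre false, fun n hn => ?_,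
    fun n hn => ?_, disjoint_left.2 fun n h1 h2 => ?_, ?_⟩
  · simpa using hmem n true hn
  · simpa using hmem n false hn
  · simpa using Part.mem_unique h1 h2
  · ext n
    have hdom : (k n).Dom ↔ true ∈ k n ∨ false ∈ k n := by
      rw [Part.dom_iff_mem]
      exact ⟨fun ⟨b, hb⟩ => by cases b <;> simp [hb], by rintro (h | h) <;> exact ⟨_, h⟩⟩
    simpa [← hdom, Part.assert] using (hspec n).2

end CESet

theorem infinite_of_not_ceSet {X : Set ℕ} (h : ¬ CESet X) : X.Infinite :=
  fun hfin => h (.of_finite hfin)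

theorem SubsetStar.trans {X Y Z : Set ℕ} (hXY : SubsetStar X Y) (hYZ : SubsetStar Y Z) :
    SubsetStar X Z :=
  (hXY.union hYZ).subset (sdiff_triangle X Y Z)

theorem exists_computableSet_subset_of_finite_compl_union {C E : Set ℕ} (hC : CESet C)
    (hE : CESet E) (hfin : (C ∪ E)ᶜ.Finite) :
    ∃ V, ComputableSet V ∧ V ⊆ E ∧ SubsetStar Cᶜ V := by
  obtain ⟨C', V, hC', hV, hC'C, hVE, hdisj, hunion⟩ := CESet.exists_reduction hC hE
  have hVc : Vᶜ = C' ∪ (C ∪ E)ᶜ := by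
    rw [← hunion]
    ext x
    have : x ∈ C' → x ∉ V := fun h => disjoint_left.1 hdisj h
    simp only [mem_compl_iff, mem_union]
    tauto
  refine ⟨V, .of_ceSet_compl hV (hVc ▸ hC'.union (.of_finite hfin)), hVE, hfin.subset ?_⟩
  rintro x ⟨hxC, hxV⟩ hx
  rw [← hunion] at hx
  exact hx.elim (fun h => hxC (hC'C h)) hxV

section Chain

variable {A : Set ℕ} {D : ℕ → Set ℕ}

theorem Generates.exists_subsetStar_of_monotone (hgen : Generates A (range D)) (hD : Monotone D)
    {W : Set ℕ} (hW : CESet W) (hWA : Disjoint W A) : ∃ k, SubsetStar W (D k) := by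
  obtain ⟨F, hFD, hF, hWF⟩ := hgen.2.2.2 W hW hWA
  have : Finite F := hF.to_subtype
  choose i hi using fun X : F => hFD X.2
  obtain ⟨k, hk⟩ := (finite_range i).bddAbove
  refine ⟨k, hWF.subset (sdiff_subset_sdiff_right ?_)⟩
  rintro x ⟨X, hXF, hxX⟩
  exact hD (hk ⟨⟨X, hXF⟩, rfl⟩) ((hi ⟨X, hXF⟩).symm ▸ hxX)

theorem exists_pairwise_disjoint_computableSet (hD : Monotone D)
    (hcover : ∀ W, CESet W → Disjoint W A → ∃ k, SubsetStar W (D k))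
    (hV : ∀ j, ∃ V, ComputableSet V ∧ Disjoint V A ∧ (V \ D j).Infinite) :
    ∃ R : ℕ → Set ℕ, (∀ n, ComputableSet (R n) ∧ Disjoint (R n) A) ∧
      Pairwise (Disjoint on R) ∧ ∀ n, (R n \ D n).Infinite := by
  choose V hVc hVA hVinf using hV
  choose c hc using fun j => hcover (V j) (hVc j).ceSet (hVA j)
  -- indices `k n` grow fast enough that `V (k i) ⊆* D (k n)` for all `i < n`
  let k : ℕ → ℕ := fun n => Nat.rec 0 (fun _ kn => kn + c kn + 1) n
  have hk_succ : ∀ n, k (n + 1) = k n + c (k n) + 1 := fun _ => rfl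
  have hk : StrictMono k := strictMono_nat_of_lt_succ fun n => by rw [hk_succ]; omega
  have hVk : ∀ {i n}, i < n → SubsetStar (V (k i)) (D (k n)) := fun {i n} hin =>
    (hc (k i)).subset <| sdiff_subset_sdiff_right <| hD <|
      (show c (k i) ≤ k (i + 1) by rw [hk_succ]; omega).trans (hk.monotone hin)
  refine ⟨disjointed (V ∘ k), fun n => ⟨?_, (hVA _).mono_left (disjointed_le _ n)⟩,
    disjoint_disjointed _, fun n => ?_⟩
  · rw [disjointed_apply]
    exact (hVc _).diff (Finset.sup_induction ComputableSet.empty (fun _ h₁ _ h₂ => h₁.union h₂)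
      fun i _ => hVc _)
  · have hfin : (⋃ i ∈ Finset.Iio n, V (k i) \ D (k n)).Finite :=
      (Finset.finite_toSet _).biUnion fun i hi => hVk (Finset.mem_Iio.1 hi)
    refine ((hVinf (k n)).sdiff hfin).mono ?_
    rintro x ⟨⟨hxV, hxD⟩, hx⟩
    simp only [mem_iUnion, mem_sdiff, not_exists, not_and, not_not] at hx
    refine ⟨?_, fun h => hxD (hD (hk.id_le n) h)⟩
    rw [disjointed_apply, Finset.sup_set_eq_biUnion]
    simp only [mem_sdiff, mem_iUnion, Function.comp_apply, not_exists]
    exact ⟨hxV, fun i hi hxi => hxD (hx i hi hxi)⟩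

theorem exists_generates_isType9 (hgen : Generates A (range D))
    (hD : ∀ i, CESet (D i) ∧ ¬ ComputableSet (D i) ∧ (D i).Infinite)
    (hnest : ∀ l, D l ⊆ D (l + 1)) (hdiff : ∀ l, ¬ CESet (D (l + 1) \ D l)) {R : ℕ → Set ℕ}
    (hR : ∀ n, ComputableSet (R n) ∧ Disjoint (R n) A) (hdisj : Pairwise (Disjoint on R))
    (hRD : ∀ n, (R n \ D n).Infinite) :
    ∃ G, Generates A G ∧ IsType9 G := by
  have hRinf : ∀ n, (R n).Infinite := fun n => (hRD n).mono sdiff_subset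
  have hinj : Injective R := pairwise_ne_iff_injective.1 <|
    hdisj.mono fun i j (h : Disjoint (R i) (R j)) heq =>
      (hRinf j).nonempty.ne_empty (disjoint_self.1 (heq ▸ h))
  have hoften : ∀ l, {j | (R j \ D l).Infinite}.Infinite := fun l =>
    (Ici_infinite l).mono fun j hj =>
      (hRD j).mono (sdiff_subset_sdiff_right (monotone_nat_of_le_succ hnest hj))
  refine ⟨range D ∪ range R, ⟨(countable_range D).union (countable_range R), ?_, ?_, ?_⟩,
    D, R, rfl, hinj, fun i j h => (hD i).2.1 (h ▸ (hR j).1), fun i => ⟨(hR i).1, hRinf i⟩,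
    hdisj, hD, hnest, hdiff, hoften⟩
  · rintro X (⟨i, rfl⟩ | ⟨i, rfl⟩)
    exacts [(hD i).1, (hR i).1.ceSet]
  · rintro X (⟨i, rfl⟩ | ⟨i, rfl⟩)
    exacts [hgen.2.2.1 _ ⟨i, rfl⟩, (hR i).2]
  · intro W hW hWA
    obtain ⟨F, hFD, hF, hWF⟩ := hgen.2.2.2 W hW hWA
    exact ⟨F, hFD.trans subset_union_left, hF, hWF⟩

theorem Generates.exists_forall_computableSet_subsetStar (hgen : Generates A (range D))
    (hD : ∀ i, CESet (D i) ∧ ¬ ComputableSet (D i) ∧ (D i).Infinite)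
    (hnest : ∀ l, D l ⊆ D (l + 1)) (hdiff : ∀ l, ¬ CESet (D (l + 1) \ D l))
    (hno9 : ¬ ∃ G, Generates A G ∧ IsType9 G) :
    ∃ j, ∀ V, ComputableSet V → Disjoint V A → SubsetStar V (D j) := by
  by_contra! hV
  have hmono : Monotone D := monotone_nat_of_le_succ hnest
  obtain ⟨R, hR, hdisj, hRD⟩ := exists_pairwise_disjoint_computableSet hmono
    (fun W => hgen.exists_subsetStar_of_monotone hmono) hV
  exact hno9 (exists_generates_isType9 hgen hD hnest hdiff hR hdisj hRD)

theorem Generates.exists_ceSet_extension (hgen : Generates A (range D)) (hDce : ∀ i, CESet (D i))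
    (hnest : ∀ l, D l ⊆ D (l + 1)) (hgap : ∀ l, (D (l + 1) \ D l).Infinite)
    {E : Set ℕ} (hE : CESet E) (hEA : Disjoint E A) :
    ∃ F, CESet F ∧ Disjoint F A ∧ SubsetStar E F ∧ (F \ E).Infinite ∧ (Aᶜ \ F).Infinite := by
  obtain ⟨m, hm⟩ := hgen.exists_subsetStar_of_monotone (monotone_nat_of_le_succ hnest) hE hEA
  refine ⟨D (m + 1), hDce _, hgen.2.2.1 _ ⟨_, rfl⟩, hm.subset (sdiff_subset_sdiff_right (hnest m)),
    ((hgap m).sdiff hm).mono ?_, (hgap (m + 1)).mono ?_⟩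
  · rintro x ⟨⟨hx, hxm⟩, hxE⟩
    exact ⟨hx, fun h => hxE ⟨h, hxm⟩⟩
  · rintro x ⟨hx, hxm⟩
    exact ⟨disjoint_left.1 (hgen.2.2.1 _ ⟨_, rfl⟩) hx, hxm⟩

end Chain

section DMaximal

variable {A B : Set ℕ}

theorem finite_compl_of_eqStar_univ {X : Set ℕ} (h : EqStar X univ) : Xᶜ.Finite := by
  simpa [compl_eq_univ_sdiff] using h.2

theorem subsetStar_compl_of_finite_compl_union
    (hB : ∀ V, ComputableSet V → Disjoint V A → SubsetStar V B) {C E : Set ℕ} (hC : CESet C)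
    (hE : CESet E) (hEA : Disjoint E A) (hfin : (C ∪ E)ᶜ.Finite) : SubsetStar Cᶜ B := by
  obtain ⟨V, hV, hVE, hCV⟩ := exists_computableSet_subset_of_finite_compl_union hC hE hfin
  exact hCV.trans (hB V hV (hEA.mono_left hVE))

theorem rMaximal_union (hA : DMaximal A) (hBce : CESet B) (hinf : (A ∪ B)ᶜ.Infinite)
    (hB : ∀ V, ComputableSet V → Disjoint V A → SubsetStar V B) : RMaximal (A ∪ B) := by
  refine ⟨hA.1.union hBce, hinf, fun R hR => ?_⟩
  obtain ⟨E, hE, hEA, hRE | hRE⟩ := hA.2 R hR.ceSet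
  · refine .inl ((subsetStar_compl_of_finite_compl_union hB (hR.compl.ceSet.union hA.1) hE hEA
      (hRE.subset fun x => ?_)).subset fun x => ?_)
    all_goals simp only [mem_compl_iff, mem_union, mem_inter_iff, mem_sdiff]; tauto
  · refine .inr ((subsetStar_compl_of_finite_compl_union hB (hR.ceSet.union hA.1) hE hEA
      (finite_compl_of_eqStar_univ hRE)).subset fun x => ?_)
    simp only [mem_compl_iff, mem_union, mem_inter_iff, mem_sdiff]
    tauto

theorem atomlessSet_union (hA : DMaximal A)
    (hB : ∀ V, ComputableSet V → Disjoint V A → SubsetStar V B)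
    (hext : ∀ E, CESet E → Disjoint E A →
      ∃ F, CESet F ∧ Disjoint F A ∧ SubsetStar E F ∧ (F \ E).Infinite ∧ (Aᶜ \ F).Infinite) :
    AtomlessSet (A ∪ B) := by
  intro C hC hABC hCinf
  obtain ⟨E, hE, hEA, hCE | hCE⟩ := hA.2 C hC
  · obtain ⟨F, hF, hFA, hEF, hFE, hAF⟩ := hext E hE hEA
    have hFA' : ∀ x ∈ F, x ∉ A := fun _ hx => disjoint_left.1 hFA hx
    refine ⟨C ∪ F, hC.union hF, finite_empty.subset fun x => ?_, (hFE.sdiff hCE).mono fun x => ?_,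
      ((hAF.sdiff hCE).sdiff hEF).mono fun x => ?_⟩
    all_goals simp only [mem_compl_iff, mem_union, mem_sdiff, mem_empty_iff_false]
    all_goals have := hFA' x; tauto
  · refine (hCinf ((subsetStar_compl_of_finite_compl_union hB (hC.union hA.1) hE hEA
      (finite_compl_of_eqStar_univ hCE)).subset fun x hx => ?_)).elim
    have := @hABC x
    simp only [mem_compl_iff, mem_union, mem_sdiff] at hx this ⊢
    tauto

end DMaximal

theorem stmt_12_general (A : Set ℕ) (hmax : DMaximal A)
    (h10 : SetOfType A 10) :
    ∃ B : Set ℕ, CESet B ∧ Disjoint B A ∧ RMaximal (A ∪ B) ∧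
      AtomlessSet (A ∪ B) := by
  obtain ⟨⟨G, hgen, D, rfl, hD, hnest, hdiff⟩, hlower⟩ := h10
  obtain ⟨j, hj⟩ :=
    hgen.exists_forall_computableSet_subsetStar hD hnest hdiff (hlower 9 (by norm_num))
  have hDA : ∀ i, Disjoint (D i) A := fun i => hgen.2.2.1 _ ⟨i, rfl⟩
  have hgap : ∀ l, (D (l + 1) \ D l).Infinite := fun l => infinite_of_not_ceSet (hdiff l)
  have hinf : (A ∪ D j)ᶜ.Infinite := (hgap j).mono fun x hx => by
    simpa [hx.2] using disjoint_left.1 (hDA (j + 1)) hx.1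
  exact ⟨D j, (hD j).1, hDA j, rMaximal_union hmax (hD j).1 hinf hj,
    atomlessSet_union hmax hj fun _ => hgen.exists_ceSet_extension (fun i => (hD i).1) hnest hgap⟩

theorem stmt_12 (A : Set ℕ) (hA : CESet A) (hmax : DMaximal A)
    (h10 : SetOfType A 10) :
    ∃ B : Set ℕ, CESet B ∧ Disjoint B A ∧ RMaximal (A ∪ B) ∧
      AtomlessSet (A ∪ B) :=
  stmt_12_general A hmax h10
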